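/- Abstract boundary lemma: let V, g : [0,1]² → ℝ be continuous with V ≤ g, suppose g(π₁,π₂) = φ(π₁) + π₂ on a region T = {(π₁,π₂) : 0 ≤ π₂ ≤ ψ(π₁)}, suppose V is Lipschitz with constant 1 in π₂, and suppose V(π₁,0) = g(π₁,0) for all π₁. Then there exists an upper semicontinuous function b : [0,1] → [0,∞) with b(π₁) ≤ ψ(π₁) such that {π ∈ T : V(π) = g(π)} = {π ∈ T : π₂ ≤ b(π₁)}. -/

import Mathlib

/-!
The contact set `K = {π ∈ T | V π = g π}` is compact, and its vertical sections are
initial segments `[0, b(π₁)]`: if `V` touches `g = φ(π₁) + π₂` at height `π₂`, then at any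
lower height `π₂'` the 1-Lipschitz bound gives `V ≥ g - (π₂ - π₂') = g`, while `V ≤ g`.
So `b(π₁)` is the top of the section, and it is upper semicontinuous because `K` is compact.
-/

open Set Filter Topology

theorem eq_const_add_of_abs_sub_le {v : ℝ → ℝ} {c y y' : ℝ} (hy : y' ≤ y)
    (hle : v y' ≤ c + y') (hlip : |v y - v y'| ≤ |y - y'|) (heq : v y = c + y) :
    v y' = c + y' := by
  rw [abs_of_nonneg (sub_nonneg.mpr hy)] at hlip
  linarith [le_abs_self (v y - v y')]

theorem subgraph_eq_sep_Icc {ψ : ℝ → ℝ} (hψ : ∀ x ∈ Icc (0:ℝ) 1, ψ x ≤ 1) :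
    {p : ℝ × ℝ | p.1 ∈ Icc 0 1 ∧ 0 ≤ p.2 ∧ p.2 ≤ ψ p.1} =
      {p ∈ Icc (0, 0) (1, 1) | p.2 ≤ ψ p.1} := by
  ext ⟨x, y⟩
  simp only [mem_ofPred_eq, mem_Icc, Prod.mk_le_mk]
  constructor
  · rintro ⟨hx, hy0, hyψ⟩
    exact ⟨⟨⟨hx.1, hy0⟩, hx.2, hyψ.trans (hψ x hx)⟩, hyψ⟩
  · rintro ⟨⟨⟨hx0, hy0⟩, hx1, -⟩, hyψ⟩
    exact ⟨⟨hx0, hx1⟩, hy0, hyψ⟩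

theorem isCompact_subgraph_sep_eq {ψ : ℝ → ℝ} {V g : ℝ × ℝ → ℝ}
    (hψ : ContinuousOn ψ (Icc 0 1)) (hV : ContinuousOn V (Icc (0, 0) (1, 1)))
    (hg : ContinuousOn g (Icc (0, 0) (1, 1))) :
    IsCompact {p ∈ {p ∈ Icc (0, 0) (1, 1) | p.2 ≤ ψ p.1} | V p = g p} := by
  have hψ' : ContinuousOn (fun p : ℝ × ℝ => ψ p.1) (Icc (0, 0) (1, 1)) :=
    hψ.comp continuousOn_fst fun p hp => ⟨hp.1.1, hp.2.1⟩
  have hsub : {p ∈ Icc (0, 0) (1, 1) | p.2 ≤ ψ p.1} ⊆ Icc (0, 0) (1, 1) := sep_subset _ _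
  exact isCompact_Icc.of_isClosed_subset
    ((isClosed_Icc.isClosed_le continuousOn_snd hψ').isClosed_eq (hV.mono hsub) (hg.mono hsub))
    ((sep_subset _ _).trans hsub)

section SectionSup

variable {X : Type*}

/-- This is `0` when the section over `x` is empty. -/
noncomputable def sectionSup (K : Set (X × ℝ)) (x : X) : ℝ :=
  sSup {y | (x, y) ∈ K}

variable [TopologicalSpace X] [T2Space X] {K : Set (X × ℝ)}

theorem IsCompact.isCompact_section (hK : IsCompact K) (x : X) :
    IsCompact {y | (x, y) ∈ K} :=
  (hK.image continuous_snd).of_isClosed_subset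
    (hK.isClosed.preimage (Continuous.prodMk_right x)) fun y hy => ⟨(x, y), hy, rfl⟩

theorem le_sectionSup (hK : IsCompact K) {x : X} {y : ℝ} (h : (x, y) ∈ K) :
    y ≤ sectionSup K x :=
  le_csSup (hK.isCompact_section x).bddAbove h

theorem sectionSup_mem (hK : IsCompact K) {x : X} {y : ℝ} (h : (x, y) ∈ K) :
    (x, sectionSup K x) ∈ K :=
  (hK.isCompact_section x).sSup_mem ⟨y, h⟩

theorem upperSemicontinuousOn_sectionSup (hK : IsCompact K) {s : Set X}
    (hs : ∀ x ∈ s, ∃ y, (x, y) ∈ K) : UpperSemicontinuousOn (sectionSup K) s := by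
  intro x _ c hc
  have hclosed : IsClosed (Prod.fst '' (K ∩ {p | c ≤ p.2})) :=
    ((hK.inter_right (isClosed_le continuous_const continuous_snd)).image
      continuous_fst).isClosed
  have hx : x ∉ Prod.fst '' (K ∩ {p | c ≤ p.2}) := by
    rintro ⟨⟨x, y⟩, ⟨hxy, hcy⟩, rfl⟩
    exact hc.not_ge (hcy.trans (le_sectionSup hK hxy))
  filter_upwards [nhdsWithin_le_nhds (hclosed.isOpen_compl.mem_nhds hx),
    self_mem_nhdsWithin] with x' hx' hx's
  obtain ⟨y, hy⟩ := hs x' hx's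
  by_contra! hcx'
  exact hx' ⟨_, ⟨sectionSup_mem hK hy, hcx'⟩, rfl⟩

end SectionSup

theorem stmt15_general (V g : ℝ × ℝ → ℝ) (φ ψ : ℝ → ℝ)
    (hψc : ContinuousOn ψ (Set.Icc (0:ℝ) 1))
    (hψ : ∀ x ∈ Set.Icc (0:ℝ) 1, ψ x ∈ Set.Icc (0:ℝ) 1)
    (T : Set (ℝ × ℝ))
    (hT : T = {p : ℝ × ℝ | p.1 ∈ Set.Icc (0:ℝ) 1 ∧ 0 ≤ p.2 ∧ p.2 ≤ ψ p.1})
    (hVcont : ContinuousOn V (Set.Icc ((0:ℝ), (0:ℝ)) (1, 1)))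
    (hgcont : ContinuousOn g (Set.Icc ((0:ℝ), (0:ℝ)) (1, 1)))
    (hVle : ∀ p ∈ Set.Icc ((0:ℝ), (0:ℝ)) (1, 1), V p ≤ g p)
    (hgT : ∀ p ∈ T, g p = φ p.1 + p.2)
    (hLip : ∀ x ∈ Set.Icc (0:ℝ) 1, ∀ y ∈ Set.Icc (0:ℝ) 1, ∀ y' ∈ Set.Icc (0:ℝ) 1,
      |V (x, y) - V (x, y')| ≤ |y - y'|)
    (hzero : ∀ x ∈ Set.Icc (0:ℝ) 1, V (x, 0) = g (x, 0)) :
    ∃ b : ℝ → ℝ,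
      (∀ x ∈ Set.Icc (0:ℝ) 1, 0 ≤ b x ∧ b x ≤ ψ x) ∧
      UpperSemicontinuousOn b (Set.Icc (0:ℝ) 1) ∧
      (∀ p ∈ T, (V p = g p ↔ p.2 ≤ b p.1)) := by
  rw [subgraph_eq_sep_Icc fun x hx => (hψ x hx).2] at hT
  subst hT
  set K := {p ∈ {p ∈ Icc (0, 0) (1, 1) | p.2 ≤ ψ p.1} | V p = g p}
  have hK : IsCompact K := isCompact_subgraph_sep_eq hψc hVcont hgcont
  have hbase : ∀ x ∈ Icc (0:ℝ) 1, (x, 0) ∈ K := fun x hx =>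
    ⟨⟨⟨⟨hx.1, le_rfl⟩, hx.2, zero_le_one⟩, (hψ x hx).1⟩, hzero x hx⟩
  refine ⟨sectionSup K, fun x hx => ⟨le_sectionSup hK (hbase x hx),
    (sectionSup_mem hK (hbase x hx)).1.2⟩,
    upperSemicontinuousOn_sectionSup hK fun x hx => ⟨0, hbase x hx⟩, ?_⟩
  rintro ⟨x, y⟩ hp
  refine ⟨fun hVg => le_sectionSup hK ⟨hp, hVg⟩, fun hyb => ?_⟩
  have htop := sectionSup_mem hK (hbase x ⟨hp.1.1.1, hp.1.2.1⟩)
  rw [hgT _ hp]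
  exact eq_const_add_of_abs_sub_le (v := fun z => V (x, z)) hyb
    ((hVle _ hp.1).trans_eq (hgT _ hp))
    (hLip x ⟨hp.1.1.1, hp.1.2.1⟩ _ ⟨htop.1.1.1.2, htop.1.1.2.2⟩ y ⟨hp.1.1.2, hp.1.2.2⟩)
    (htop.2.trans (hgT _ htop.1))

/-- abstract boundary lemma: V, g continuous on [0,1]² with V ≤ g,
g(π₁,π₂) = φ(π₁) + π₂ on T = {0 ≤ π₂ ≤ ψ(π₁)}, V Lipschitz(1) in π₂, and
V(π₁,0) = g(π₁,0). Then there is an upper semicontinuous b with 0 ≤ b ≤ ψ such that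
{π ∈ T : V(π) = g(π)} = {π ∈ T : π₂ ≤ b(π₁)}. -/
theorem stmt15 (V g : ℝ × ℝ → ℝ) (φ ψ : ℝ → ℝ)
    (hφc : ContinuousOn φ (Set.Icc (0:ℝ) 1)) (hψc : ContinuousOn ψ (Set.Icc (0:ℝ) 1))
    (hφ0 : ∀ x ∈ Set.Icc (0:ℝ) 1, 0 ≤ φ x)
    (hψ : ∀ x ∈ Set.Icc (0:ℝ) 1, ψ x ∈ Set.Icc (0:ℝ) 1)
    (T : Set (ℝ × ℝ))
    (hT : T = {p : ℝ × ℝ | p.1 ∈ Set.Icc (0:ℝ) 1 ∧ 0 ≤ p.2 ∧ p.2 ≤ ψ p.1})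
    (hVcont : ContinuousOn V (Set.Icc ((0:ℝ), (0:ℝ)) (1, 1)))
    (hgcont : ContinuousOn g (Set.Icc ((0:ℝ), (0:ℝ)) (1, 1)))
    (hVle : ∀ p ∈ Set.Icc ((0:ℝ), (0:ℝ)) (1, 1), V p ≤ g p)
    (hgT : ∀ p ∈ T, g p = φ p.1 + p.2)
    (hLip : ∀ x ∈ Set.Icc (0:ℝ) 1, ∀ y ∈ Set.Icc (0:ℝ) 1, ∀ y' ∈ Set.Icc (0:ℝ) 1,
      |V (x, y) - V (x, y')| ≤ |y - y'|)
    (hzero : ∀ x ∈ Set.Icc (0:ℝ) 1, V (x, 0) = g (x, 0)) :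
    ∃ b : ℝ → ℝ,
      (∀ x ∈ Set.Icc (0:ℝ) 1, 0 ≤ b x ∧ b x ≤ ψ x) ∧
      UpperSemicontinuousOn b (Set.Icc (0:ℝ) 1) ∧
      (∀ p ∈ T, (V p = g p ↔ p.2 ≤ b p.1)) :=
  stmt15_general V g φ ψ hψc hψ T hT hVcont hgcont hVle hgT hLip hzero
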